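/- Basic estimate from the expansion: Assume ℙ is translation invariant. For every B ∈ ℱ and every k ∈ ℕ, |P_ℙ(η_k^EP ∈ B) − ℙ(B)| ≤ sup_{A ∈ 𝒜_{−∞}} |ℙ(B|A) − ℙ(B)|. -/

import Mathlib

open MeasureTheory ProbabilityTheory Filter Topology

namespace RWDRE

/-- Space-time sites: `ℤ^d × ℤ` (space, time). -/
abbrev Site (d : ℕ) : Type := (Fin d → ℤ) × ℤ

/-- Environments: `Ω = E^{ℤ^{d+1}}`. We write `η (x, t)` for `η_t(x)`. -/
abbrev Env (d : ℕ) (E : Type*) : Type _ := Site d → E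

variable {d : ℕ} {E : Type*}

/-- The shift `θ_{x,t}`: `(θ_{x,t} η)_s(y) = η_{s+t}(y+x)`. -/
def shift (x : Fin d → ℤ) (t : ℤ) (η : Env d E) : Env d E :=
  fun p => η (p.1 + x, p.2 + t)

section Meas

variable [MeasurableSpace E]

/-- The sub-σ-algebra `ℱ_Λ` generated by the cylinders of `Λ ⊆ ℤ^{d+1}`. -/
def cylSA (Λ : Set (Site d)) : MeasurableSpace (Env d E) :=
  MeasurableSpace.comap (fun (η : Env d E) (p : Λ) => η ↑p) MeasurableSpace.pi

/-- Elementary conditional probability `ℙ(B|A) = ℙ(B ∩ A)/ℙ(A)` as a real number. -/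
noncomputable def condProb {Ω : Type*} [MeasurableSpace Ω] (μ : Measure Ω) (B A : Set Ω) : ℝ :=
  (μ (B ∩ A)).toReal / (μ A).toReal

/-- Translation invariance of the environment law. -/
def IsTranslationInvariant (P : Measure (Env d E)) : Prop :=
  ∀ (x : Fin d → ℤ) (t : ℤ), P.map (shift x t) = P

/-- Ergodicity in the time direction. -/
def IsTimeErgodic (P : Measure (Env d E)) : Prop :=
  ∀ B : Set (Env d E), MeasurableSet B → shift (0 : Fin d → ℤ) 1 ⁻¹' B = B →
    P B = 0 ∨ P B = 1

/-- The standing assumptions on the jump kernel `α` of the random walk: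
nonnegative, normalized, jump range contained in the finite set `𝓡 ∋ o` with
`‖y‖₁ ≤ R` on `𝓡`, and of finite range `R` in its dependence on the environment. -/
structure IsTransition (𝓡 : Finset (Fin d → ℤ)) (R : ℕ)
    (α : Env d E → (Fin d → ℤ) → ℝ) : Prop where
  nonneg : ∀ η y, 0 ≤ α η y
  sum_one : ∀ η, ∑ y ∈ 𝓡, α η y = 1
  supp : ∀ η y, y ∉ 𝓡 → α η y = 0
  zero_mem : (0 : Fin d → ℤ) ∈ 𝓡
  range_le : ∀ y ∈ 𝓡, (∑ i, |y i|) ≤ (R : ℤ)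
  finRange : ∀ η σ z, (∀ y : Fin d → ℤ, (∀ i, |y i| ≤ (R : ℤ)) → η (y, 0) = σ (y, 0)) →
    α η z = α σ z

/-- Backwards trajectories `Γ_k`: `γ` is indexed by `j ∈ {0,…,k}`, where index `j`
corresponds to time `j - k ∈ {-k,…,0}`; `γ` ends at the origin and has increments in `𝓡`. -/
def IsPath (𝓡 : Finset (Fin d → ℤ)) (k : ℕ) (γ : Fin (k + 1) → (Fin d → ℤ)) : Prop :=
  γ (Fin.last k) = 0 ∧ ∀ i : Fin k, γ i.succ - γ i.castSucc ∈ 𝓡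

/-- Extension of a path to all of `ℕ` (constant after `k`). -/
def pad {k : ℕ} (γ : Fin (k + 1) → (Fin d → ℤ)) : ℕ → (Fin d → ℤ) :=
  fun j => γ ⟨min j k, Nat.lt_succ_of_le (Nat.min_le_right j k)⟩

/-- The event `A_{-k}^{-m}(γ,σ)`: the environment agrees with `σ` on the
`R`-neighbourhood of the path at the times `-k,…,-m` (index `j ↔` time `j - k`). -/
def pathEvent (R : ℕ) (k m : ℕ) (γ : Fin (k + 1) → (Fin d → ℤ)) (σ : Env d E) :
    Set (Env d E) :=
  {η | ∀ j : ℕ, j ≤ k - m → ∀ y : Fin d → ℤ, (∀ i, |y i| ≤ (R : ℤ)) →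
    η (y + pad γ j, (j : ℤ) - (k : ℤ)) = σ (y + pad γ j, (j : ℤ) - (k : ℤ))}

/-- `𝒜_{-k}^{-m}(γ)`: all possible (positive-probability) observations along `γ`. -/
def obsEvents (R : ℕ) (k m : ℕ) (γ : Fin (k + 1) → (Fin d → ℤ))
    (P : Measure (Env d E)) : Set (Set (Env d E)) :=
  {A | ∃ σ : Env d E, A = pathEvent R k m γ σ ∧ 0 < P A}

/-- `𝒜_{-∞}^{-m}`. -/
def obsFrom (𝓡 : Finset (Fin d → ℤ)) (R : ℕ) (P : Measure (Env d E)) (m : ℕ) :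
    Set (Set (Env d E)) :=
  {A | ∃ k, m ≤ k ∧ ∃ γ : Fin (k + 1) → (Fin d → ℤ), IsPath 𝓡 k γ ∧ A ∈ obsEvents R k m γ P}

/-- `𝒜_{-∞} = 𝒜_{-∞}^{-1}`. -/
abbrev obsAll (𝓡 : Finset (Fin d → ℤ)) (R : ℕ) (P : Measure (Env d E)) :
    Set (Set (Env d E)) := obsFrom 𝓡 R P 1

/-- The cone `𝒞(j) = {(x,t) : t ≥ j, ‖x‖₁ ≤ (R+1)t}`. -/
def coneSet (d : ℕ) (R : ℕ) (j : ℕ) : Set (Site d) :=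
  {p | (j : ℤ) ≤ p.2 ∧ (∑ i, |p.1 i|) ≤ ((R : ℤ) + 1) * p.2}

/-- The forward half-space `ℍ = ℤ^d × ℤ_{≥0}`. -/
def halfSpace (d : ℕ) : Set (Site d) := {p | 0 ≤ p.2}

/-- `Λ(l) = {z ∈ ℍ : ‖z‖₁ ≥ l}`. -/
def lamSet (d : ℕ) (l : ℕ) : Set (Site d) :=
  {p | 0 ≤ p.2 ∧ (l : ℤ) ≤ (∑ i, |p.1 i|) + p.2}

/-- One step of the environment process applied to a measure: `ℚ ↦ ℚK`, where
`K(η,·) = Σ_{y∈𝓡} α(η,y) δ_{θ_{y,1}η}`. -/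
noncomputable def stepEP (𝓡 : Finset (Fin d → ℤ)) (α : Env d E → (Fin d → ℤ) → ℝ)
    (Q : Measure (Env d E)) : Measure (Env d E) :=
  ∑ y ∈ 𝓡, (Q.withDensity fun η => ENNReal.ofReal (α η y)).map (shift y 1)

/-- `ℚ` is invariant for the environment process. -/
def IsInvariantEP (𝓡 : Finset (Fin d → ℤ)) (α : Env d E → (Fin d → ℤ) → ℝ)
    (Q : Measure (Env d E)) : Prop :=
  stepEP 𝓡 α Q = Q

/-- `ℚ` is ergodic for the environment process: every harmonic indicator is a.s. constant. -/
def IsErgodicEP (𝓡 : Finset (Fin d → ℤ)) (α : Env d E → (Fin d → ℤ) → ℝ)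
    (Q : Measure (Env d E)) : Prop :=
  ∀ B : Set (Env d E), MeasurableSet B →
    (∀ᵐ η ∂Q, ∑ y ∈ 𝓡, α η y * Set.indicator B (fun _ => (1 : ℝ)) (shift y 1 η)
        = Set.indicator B (fun _ => (1 : ℝ)) η) →
    Q B = 0 ∨ Q B = 1

/-- `P` is the annealed (joint) law of the environment (with law `ℙ`) and the walk
`(X_t)_{t≥0}` with `X_0 = o` and quenched transitions
`P_η(X_{t+1} = y + z | X_t = y) = α(θ_{y,t}η, z)`, characterized through its
finite-dimensional distributions. -/
def IsAnnealedLaw (α : Env d E → (Fin d → ℤ) → ℝ) (P : Measure (Env d E))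
    (PP : Measure (Env d E × (ℕ → (Fin d → ℤ)))) : Prop :=
  ∀ (k : ℕ) (x : ℕ → (Fin d → ℤ)) (B : Set (Env d E)), MeasurableSet B →
    PP {p | p.1 ∈ B ∧ ∀ i ≤ k, p.2 i = x i} =
      if x 0 = 0 then
        ∫⁻ η in B, ∏ i ∈ Finset.range k,
          ENNReal.ofReal (α (shift (x i) (i : ℤ) η) (x (i + 1) - x i)) ∂P
      else 0

end Meas

end RWDRE

namespace RWDRE

open MeasureTheory ProbabilityTheory Filter Topology

open scoped ENNReal

/-!
Summing over the first `k` steps of the walk and using translation invariance,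
`P_ℙ(η_k^EP ∈ B) = ∑ₓ ∫_B wₓ dℙ` with `∑ₓ ∫ wₓ dℙ = 1`, where `wₓ` is the quenched probability
of the path `x`, shifted so that it ends at the origin at time `0`. By the finite range of `α`,
`wₓ` only depends on the environment in the `R`-boxes around the path at times `-k, …, -1`, so it
is constant on the atoms of `𝒜_{-k}^{-1}`. On each atom `A`, `ℙ(B ∩ A)` is within `c ℙ(A)` of
`ℙ(B) ℙ(A)`, and summing these bounds against the weights gives the estimate.
-/

section Cells

variable {Ω ι : Type*} [MeasurableSpace Ω] [MeasurableSpace ι] [Countable ι]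
  [MeasurableSingletonClass ι] {μ : Measure Ω} {ρ : Ω → ι} {f : Ω → ℝ≥0∞} {s : Set Ω}

lemma measurable_of_factorsThrough (hρ : Measurable ρ) (hf : f.FactorsThrough ρ) :
    Measurable f := by
  rw [← hf.extend_comp (0 : ι → ℝ≥0∞)]
  exact (measurable_of_countable _).comp hρ

lemma setLIntegral_comp_eq_tsum (hρ : Measurable ρ) (g : ι → ℝ≥0∞) (hs : MeasurableSet s) :
    ∫⁻ ω in s, g (ρ ω) ∂μ = ∑' v, g v * μ (s ∩ ρ ⁻¹' {v}) := by
  rw [← lintegral_map (measurable_of_countable g) hρ, lintegral_countable']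
  congr! 2 with v
  rw [Measure.map_apply hρ (measurableSet_singleton v), Measure.restrict_apply' hs,
    Set.inter_comm]

lemma setLIntegral_eq_tsum_of_factorsThrough (hρ : Measurable ρ) (hf : f.FactorsThrough ρ)
    (hs : MeasurableSet s) :
    ∫⁻ ω in s, f ω ∂μ = ∑' v, Function.extend ρ f 0 v * μ (s ∩ ρ ⁻¹' {v}) := by
  simp only [← setLIntegral_comp_eq_tsum hρ _ hs, hf.extend_apply]

lemma setLIntegral_le_mul_lintegral_of_factorsThrough (hρ : Measurable ρ)
    (hf : f.FactorsThrough ρ) (hs : MeasurableSet s) {r : ℝ≥0∞}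
    (hr : ∀ v, μ (ρ ⁻¹' {v}) ≠ 0 → μ (s ∩ ρ ⁻¹' {v}) ≤ r * μ (ρ ⁻¹' {v})) :
    ∫⁻ ω in s, f ω ∂μ ≤ r * ∫⁻ ω, f ω ∂μ := by
  rw [setLIntegral_eq_tsum_of_factorsThrough hρ hf hs, ← setLIntegral_univ,
    setLIntegral_eq_tsum_of_factorsThrough hρ hf .univ, ← ENNReal.tsum_mul_left]
  refine ENNReal.tsum_le_tsum fun v => ?_
  rw [Set.univ_inter, mul_left_comm]
  rcases eq_or_ne (μ (ρ ⁻¹' {v})) 0 with hv | hv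
  · simp [measure_mono_null Set.inter_subset_right hv]
  · gcongr
    exact hr v hv

lemma mul_lintegral_le_setLIntegral_of_factorsThrough (hρ : Measurable ρ)
    (hf : f.FactorsThrough ρ) (hs : MeasurableSet s) {q : ℝ≥0∞}
    (hq : ∀ v, μ (ρ ⁻¹' {v}) ≠ 0 → q * μ (ρ ⁻¹' {v}) ≤ μ (s ∩ ρ ⁻¹' {v})) :
    q * ∫⁻ ω, f ω ∂μ ≤ ∫⁻ ω in s, f ω ∂μ := by
  rw [setLIntegral_eq_tsum_of_factorsThrough hρ hf hs, ← setLIntegral_univ,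
    setLIntegral_eq_tsum_of_factorsThrough hρ hf .univ, ← ENNReal.tsum_mul_left]
  refine ENNReal.tsum_le_tsum fun v => ?_
  rw [Set.univ_inter, mul_left_comm]
  rcases eq_or_ne (μ (ρ ⁻¹' {v})) 0 with hv | hv
  · simp [hv]
  · gcongr
    exact hq v hv

lemma exists_measure_preimage_singleton_ne_zero [IsProbabilityMeasure μ] (hρ : Measurable ρ) :
    ∃ v, μ (ρ ⁻¹' {v}) ≠ 0 := by
  by_contra! h
  have := setLIntegral_comp_eq_tsum (μ := μ) hρ 1 MeasurableSet.univ
  simp [h] at this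

end Cells

section CondProb

variable {Ω : Type*} [MeasurableSpace Ω] {μ : Measure Ω} [IsFiniteMeasure μ] {A B : Set Ω}
  {p c : ℝ}

lemma measure_inter_le_of_abs_condProb_sub_le (h : |condProb μ B A - p| ≤ c) :
    μ (B ∩ A) ≤ ENNReal.ofReal (p + c) * μ A := by
  rcases eq_or_ne (μ A) 0 with hA | hA
  · simp [measure_mono_null Set.inter_subset_right hA]
  have hA' : 0 < (μ A).toReal := ENNReal.toReal_pos hA (measure_ne_top _ _)
  have hle : (μ (B ∩ A)).toReal ≤ (p + c) * (μ A).toReal := by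
    rw [← div_le_iff₀ hA']
    have := (abs_le.mp h).2
    unfold condProb at this
    linarith
  calc μ (B ∩ A) = ENNReal.ofReal (μ (B ∩ A)).toReal := (ENNReal.ofReal_toReal (by simp)).symm
    _ ≤ ENNReal.ofReal ((p + c) * (μ A).toReal) := ENNReal.ofReal_le_ofReal hle
    _ = ENNReal.ofReal (p + c) * μ A := by
      rw [ENNReal.ofReal_mul' ENNReal.toReal_nonneg, ENNReal.ofReal_toReal (by simp)]

lemma ofReal_mul_le_measure_inter_of_abs_condProb_sub_le (h : |condProb μ B A - p| ≤ c) :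
    ENNReal.ofReal (p - c) * μ A ≤ μ (B ∩ A) := by
  rcases eq_or_ne (μ A) 0 with hA | hA
  · simp [hA]
  have hA' : 0 < (μ A).toReal := ENNReal.toReal_pos hA (measure_ne_top _ _)
  have hle : (p - c) * (μ A).toReal ≤ (μ (B ∩ A)).toReal := by
    rw [← le_div_iff₀ hA']
    have := (abs_le.mp h).1
    unfold condProb at this
    linarith
  calc ENNReal.ofReal (p - c) * μ A = ENNReal.ofReal ((p - c) * (μ A).toReal) := by
        rw [ENNReal.ofReal_mul' ENNReal.toReal_nonneg, ENNReal.ofReal_toReal (by simp)]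
    _ ≤ ENNReal.ofReal (μ (B ∩ A)).toReal := ENNReal.ofReal_le_ofReal hle
    _ = μ (B ∩ A) := ENNReal.ofReal_toReal (by simp)

lemma abs_toReal_sub_le_of_le_of_le {x : ℝ≥0∞} (hx : x ≠ ∞) (hpc : 0 ≤ p + c)
    (hlow : ENNReal.ofReal (p - c) ≤ x) (hup : x ≤ ENNReal.ofReal (p + c)) :
    |x.toReal - p| ≤ c := by
  have h₁ := (ENNReal.ofReal_le_iff_le_toReal hx).mp hlow
  have h₂ := ENNReal.toReal_le_of_le_ofReal hpc hup
  exact abs_le.mpr ⟨by linarith, by linarith⟩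

end CondProb

section Paths

variable {d : ℕ} {E : Type*}

lemma shift_shift (x x' : Fin d → ℤ) (t t' : ℤ) (η : Env d E) :
    shift x t (shift x' t' η) = shift (x + x') (t + t') η := by
  funext p
  simp [shift, add_assoc]

lemma pad_eq {k : ℕ} (x : Fin (k + 1) → (Fin d → ℤ)) {j : ℕ} (h : j ≤ k) :
    pad x j = x ⟨j, Nat.lt_succ_of_le h⟩ :=
  congrArg x (Fin.ext (Nat.min_eq_left h))

def Box (d R : ℕ) : Type := {y : Fin d → ℤ // ∀ i, |y i| ≤ (R : ℤ)}

instance (d R : ℕ) : Finite (Box d R) :=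
  Set.Finite.to_subtype (s := {y : Fin d → ℤ | ∀ i, |y i| ≤ (R : ℤ)}) <|
    (Set.Finite.pi fun _ => Set.finite_Icc (-(R : ℤ)) R).subset fun _ hy i _ => abs_le.mp (hy i)

def recenter {k : ℕ} (x : Fin (k + 1) → (Fin d → ℤ)) : Fin (k + 1) → (Fin d → ℤ) :=
  fun j => x j - x (Fin.last k)

def restrictAlong (R k : ℕ) (γ : Fin (k + 1) → (Fin d → ℤ)) (η : Env d E) :
    Fin k → Box d R → E :=
  fun j y => η (y.1 + pad γ j, (j : ℤ) - k)

lemma pathEvent_one_eq_preimage {R k : ℕ} (hk : 1 ≤ k) (γ : Fin (k + 1) → (Fin d → ℤ))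
    (σ : Env d E) :
    pathEvent R k 1 γ σ = restrictAlong R k γ ⁻¹' {restrictAlong R k γ σ} := by
  ext η
  simp only [pathEvent, Set.mem_ofPred_eq, Set.mem_preimage, Set.mem_singleton_iff]
  constructor
  · intro h
    funext j y
    exact h j (by omega) y.1 y.2
  · intro h j hj y hy
    exact congrFun (congrFun h ⟨j, by omega⟩) ⟨y, hy⟩

noncomputable def pathWeight (α : Env d E → (Fin d → ℤ) → ℝ) (k : ℕ)
    (x : Fin (k + 1) → (Fin d → ℤ)) (η : Env d E) : ℝ≥0∞ :=
  ∏ i ∈ Finset.range k,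
    ENNReal.ofReal (α (shift (pad (recenter x) i) ((i : ℤ) - k) η) (pad x (i + 1) - pad x i))

variable {𝓡 : Finset (Fin d → ℤ)} {R : ℕ} {α : Env d E → (Fin d → ℤ) → ℝ}

lemma pathWeight_factorsThrough (hα : IsTransition 𝓡 R α) {k : ℕ}
    (x : Fin (k + 1) → (Fin d → ℤ)) :
    (pathWeight α k x).FactorsThrough (restrictAlong R k (recenter x)) := by
  intro η σ h
  refine Finset.prod_congr rfl fun i hi => ?_
  congr 1
  refine hα.finRange _ _ _ fun y hy => ?_
  simpa [restrictAlong, shift] using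
    congrFun (congrFun h ⟨i, Finset.mem_range.mp hi⟩) ⟨y, hy⟩

lemma pathWeight_eq_zero (hα : IsTransition 𝓡 R α) {k : ℕ} (x : Fin (k + 1) → (Fin d → ℤ))
    {i : Fin k} (hi : x i.succ - x i.castSucc ∉ 𝓡) : pathWeight α k x = 0 := by
  funext η
  refine Finset.prod_eq_zero (Finset.mem_range.mpr i.isLt) ?_
  have hstep : pad x (i + 1) - pad x i = x i.succ - x i.castSucc := by
    rw [pad_eq x i.isLt, pad_eq x i.isLt.le]
    rfl
  rw [hstep, hα.supp _ _ hi, ENNReal.ofReal_zero]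

section Meas

variable [MeasurableSpace E]

lemma measurable_shift (x : Fin d → ℤ) (t : ℤ) : Measurable (shift x t : Env d E → Env d E) :=
  measurable_pi_lambda _ fun _ => measurable_pi_apply _

lemma measurable_restrictAlong (R k : ℕ) (γ : Fin (k + 1) → (Fin d → ℤ)) :
    Measurable (restrictAlong (E := E) R k γ) :=
  measurable_pi_lambda _ fun _ => measurable_pi_lambda _ fun _ => measurable_pi_apply _

lemma restrictAlong_preimage_mem_obsAll {P : Measure (Env d E)} {k : ℕ} (hk : 1 ≤ k)
    {x : Fin (k + 1) → (Fin d → ℤ)} (hx : ∀ i : Fin k, x i.succ - x i.castSucc ∈ 𝓡)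
    {v : Fin k → Box d R → E} (hv : P (restrictAlong R k (recenter x) ⁻¹' {v}) ≠ 0) :
    restrictAlong R k (recenter x) ⁻¹' {v} ∈ obsAll 𝓡 R P := by
  obtain ⟨σ, rfl⟩ := nonempty_of_measure_ne_zero hv
  refine ⟨k, hk, recenter x, ⟨sub_self _, fun i => ?_⟩, σ, (pathEvent_one_eq_preimage hk _ σ).symm,
    pos_iff_ne_zero.mpr hv⟩
  simpa [recenter] using hx i

variable [Finite E] [MeasurableSingletonClass E]

lemma obsAll_nonempty (h𝓡 : (0 : Fin d → ℤ) ∈ 𝓡) (P : Measure (Env d E))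
    [IsProbabilityMeasure P] : (obsAll 𝓡 R P).Nonempty := by
  obtain ⟨v, hv⟩ := exists_measure_preimage_singleton_ne_zero (μ := P)
    (measurable_restrictAlong R 1 (recenter (0 : Fin 2 → (Fin d → ℤ))))
  exact ⟨_, restrictAlong_preimage_mem_obsAll le_rfl (fun _ => by simpa using h𝓡) hv⟩

lemma measurable_pathWeight (hα : IsTransition 𝓡 R α) {k : ℕ} (x : Fin (k + 1) → (Fin d → ℤ)) :
    Measurable (pathWeight α k x) :=
  measurable_of_factorsThrough (measurable_restrictAlong R k _) (pathWeight_factorsThrough hα x)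

end Meas

end Paths

section Annealed

variable {d : ℕ} {E : Type*} [MeasurableSpace E]

lemma measure_shift_mem_eq_tsum (PP : Measure (Env d E × (ℕ → (Fin d → ℤ))))
    {B : Set (Env d E)} (hB : MeasurableSet B) (k : ℕ) :
    PP {p | shift (p.2 k) (k : ℤ) p.1 ∈ B} =
      ∑' x : Fin (k + 1) → (Fin d → ℤ),
        PP {p | p.1 ∈ shift (x (Fin.last k)) k ⁻¹' B ∧ ∀ i ≤ k, p.2 i = pad x i} := by
  rw [← measure_iUnion]
  · congr 1
    ext p
    simp only [Set.mem_ofPred_eq, Set.mem_iUnion, Set.mem_preimage]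
    constructor
    · intro hp
      exact ⟨fun i => p.2 i, hp, fun i hi => by rw [pad_eq _ hi]⟩
    · rintro ⟨x, hx, hpath⟩
      rwa [hpath k le_rfl, pad_eq x le_rfl]
  · intro x x' hxx'
    refine Set.disjoint_left.mpr fun p ⟨_, h⟩ ⟨_, h'⟩ => hxx' (funext fun i => ?_)
    have hi := Nat.lt_succ_iff.mp i.isLt
    simpa [pad_eq _ hi] using (h i hi).symm.trans (h' i hi)
  · intro x
    have hset : {p | p.1 ∈ shift (x (Fin.last k)) k ⁻¹' B ∧ ∀ i ≤ k, p.2 i = pad x i} =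
        Prod.fst ⁻¹' (shift (x (Fin.last k)) k ⁻¹' B) ∩
          ⋂ i, ⋂ (_ : i ≤ k), (fun p : Env d E × (ℕ → (Fin d → ℤ)) => p.2 i) ⁻¹' {pad x i} := by
      ext
      simp
    rw [hset]
    exact (measurable_fst (measurable_shift _ _ hB)).inter <| .iInter fun i => .iInter fun _ =>
      ((measurable_pi_apply i).comp measurable_snd) (measurableSet_singleton _)

variable [Finite E] [MeasurableSingletonClass E] {𝓡 : Finset (Fin d → ℤ)} {R : ℕ}
  {α : Env d E → (Fin d → ℤ) → ℝ} {P : Measure (Env d E)}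
  {PP : Measure (Env d E × (ℕ → (Fin d → ℤ)))} {B : Set (Env d E)} {k : ℕ}

lemma annealed_measure_path_eq (hα : IsTransition 𝓡 R α) (htrans : IsTranslationInvariant P)
    (hPP : IsAnnealedLaw α P PP) (hB : MeasurableSet B) (x : Fin (k + 1) → (Fin d → ℤ)) :
    PP {p | p.1 ∈ shift (x (Fin.last k)) k ⁻¹' B ∧ ∀ i ≤ k, p.2 i = pad x i} =
      if x 0 = 0 then ∫⁻ η in B, pathWeight α k x η ∂P else 0 := by
  have hx₀ : pad x 0 = x 0 := pad_eq x k.zero_le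
  rw [hPP k (pad x) _ (measurable_shift _ _ hB), hx₀]
  split_ifs
  · conv_rhs => rw [← htrans (x (Fin.last k)) k]
    rw [setLIntegral_map hB (measurable_pathWeight hα x) (measurable_shift _ _)]
    refine lintegral_congr fun η => Finset.prod_congr rfl fun i _ => ?_
    rw [shift_shift, show pad (recenter x) i + x (Fin.last k) = pad x i from sub_add_cancel _ _,
      sub_add_cancel]
  · rfl

lemma annealed_eq_tsum (hα : IsTransition 𝓡 R α) (htrans : IsTranslationInvariant P)
    (hPP : IsAnnealedLaw α P PP) (hB : MeasurableSet B) (k : ℕ) :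
    PP {p | shift (p.2 k) (k : ℤ) p.1 ∈ B} =
      ∑' x : Fin (k + 1) → (Fin d → ℤ), if x 0 = 0 then ∫⁻ η in B, pathWeight α k x η ∂P else 0 :=
  (measure_shift_mem_eq_tsum PP hB k).trans <|
    tsum_congr (annealed_measure_path_eq hα htrans hPP hB)

lemma tsum_lintegral_pathWeight_eq_one [IsProbabilityMeasure PP] (hα : IsTransition 𝓡 R α)
    (htrans : IsTranslationInvariant P) (hPP : IsAnnealedLaw α P PP) (k : ℕ) :
    ∑' x : Fin (k + 1) → (Fin d → ℤ), (if x 0 = 0 then ∫⁻ η, pathWeight α k x η ∂P else 0) = 1 := by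
  simpa using (annealed_eq_tsum hα htrans hPP MeasurableSet.univ k).symm

lemma annealed_shift_mem_zero (hα : IsTransition 𝓡 R α) (htrans : IsTranslationInvariant P)
    (hPP : IsAnnealedLaw α P PP) (hB : MeasurableSet B) :
    PP {p | shift (p.2 0) ((0 : ℕ) : ℤ) p.1 ∈ B} = P B := by
  rw [annealed_eq_tsum hα htrans hPP hB 0, tsum_eq_single 0]
  · simp [pathWeight]
  · intro x hx
    exact if_neg fun h => hx (funext fun i => by rwa [Subsingleton.elim (α := Fin 1) i 0])

lemma setLIntegral_pathWeight_le (hα : IsTransition 𝓡 R α) (hk : 1 ≤ k) (hB : MeasurableSet B)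
    {r : ℝ≥0∞} (hr : ∀ A ∈ obsAll 𝓡 R P, P (B ∩ A) ≤ r * P A) (x : Fin (k + 1) → (Fin d → ℤ)) :
    ∫⁻ η in B, pathWeight α k x η ∂P ≤ r * ∫⁻ η, pathWeight α k x η ∂P := by
  by_cases hx : ∀ i : Fin k, x i.succ - x i.castSucc ∈ 𝓡
  · exact setLIntegral_le_mul_lintegral_of_factorsThrough (measurable_restrictAlong R k _)
      (pathWeight_factorsThrough hα x) hB fun v hv =>
        hr _ (restrictAlong_preimage_mem_obsAll hk hx hv)
  · obtain ⟨i, hi⟩ := not_forall.mp hx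
    simp [pathWeight_eq_zero hα x hi]

lemma mul_lintegral_pathWeight_le (hα : IsTransition 𝓡 R α) (hk : 1 ≤ k) (hB : MeasurableSet B)
    {q : ℝ≥0∞} (hq : ∀ A ∈ obsAll 𝓡 R P, q * P A ≤ P (B ∩ A)) (x : Fin (k + 1) → (Fin d → ℤ)) :
    q * ∫⁻ η, pathWeight α k x η ∂P ≤ ∫⁻ η in B, pathWeight α k x η ∂P := by
  by_cases hx : ∀ i : Fin k, x i.succ - x i.castSucc ∈ 𝓡
  · exact mul_lintegral_le_setLIntegral_of_factorsThrough (measurable_restrictAlong R k _)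
      (pathWeight_factorsThrough hα x) hB fun v hv =>
        hq _ (restrictAlong_preimage_mem_obsAll hk hx hv)
  · obtain ⟨i, hi⟩ := not_forall.mp hx
    simp [pathWeight_eq_zero hα x hi]

variable [IsProbabilityMeasure PP]

lemma annealed_le_of_forall_obsAll (hα : IsTransition 𝓡 R α) (htrans : IsTranslationInvariant P)
    (hPP : IsAnnealedLaw α P PP) (hB : MeasurableSet B) (hk : 1 ≤ k) {r : ℝ≥0∞}
    (hr : ∀ A ∈ obsAll 𝓡 R P, P (B ∩ A) ≤ r * P A) :
    PP {p | shift (p.2 k) (k : ℤ) p.1 ∈ B} ≤ r := by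
  calc PP {p | shift (p.2 k) (k : ℤ) p.1 ∈ B}
      = ∑' x : Fin (k + 1) → (Fin d → ℤ),
          if x 0 = 0 then ∫⁻ η in B, pathWeight α k x η ∂P else 0 :=
        annealed_eq_tsum hα htrans hPP hB k
    _ ≤ ∑' x : Fin (k + 1) → (Fin d → ℤ),
          r * if x 0 = 0 then ∫⁻ η, pathWeight α k x η ∂P else 0 := by
        refine ENNReal.tsum_le_tsum fun x => ?_
        split_ifs
        · exact setLIntegral_pathWeight_le hα hk hB hr x
        · simp
    _ = r := by rw [ENNReal.tsum_mul_left, tsum_lintegral_pathWeight_eq_one hα htrans hPP, mul_one]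

lemma le_annealed_of_forall_obsAll (hα : IsTransition 𝓡 R α) (htrans : IsTranslationInvariant P)
    (hPP : IsAnnealedLaw α P PP) (hB : MeasurableSet B) (hk : 1 ≤ k) {q : ℝ≥0∞}
    (hq : ∀ A ∈ obsAll 𝓡 R P, q * P A ≤ P (B ∩ A)) :
    q ≤ PP {p | shift (p.2 k) (k : ℤ) p.1 ∈ B} := by
  calc q = ∑' x : Fin (k + 1) → (Fin d → ℤ),
          q * if x 0 = 0 then ∫⁻ η, pathWeight α k x η ∂P else 0 := by
        rw [ENNReal.tsum_mul_left, tsum_lintegral_pathWeight_eq_one hα htrans hPP, mul_one]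
    _ ≤ ∑' x : Fin (k + 1) → (Fin d → ℤ),
          if x 0 = 0 then ∫⁻ η in B, pathWeight α k x η ∂P else 0 := by
        refine ENNReal.tsum_le_tsum fun x => ?_
        split_ifs
        · exact mul_lintegral_pathWeight_le hα hk hB hq x
        · simp
    _ = PP {p | shift (p.2 k) (k : ℤ) p.1 ∈ B} := (annealed_eq_tsum hα htrans hPP hB k).symm

end Annealed

/-- Lemma 4.1, basic estimate from the expansion. For every `B ∈ ℱ`
and every `k`, `|P_ℙ(η_k^EP ∈ B) − ℙ(B)| ≤ sup_{A ∈ 𝒜_{-∞}} |ℙ(B|A) − ℙ(B)|`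
(formulated as: the left-hand side is at most any upper bound of the right-hand family). -/
theorem basic_estimate_EP
    {d : ℕ} {E : Type*} [Finite E] [MeasurableSpace E] [MeasurableSingletonClass E]
    (𝓡 : Finset (Fin d → ℤ)) (R : ℕ) (α : Env d E → (Fin d → ℤ) → ℝ)
    (hα : IsTransition 𝓡 R α)
    (P : Measure (Env d E)) [IsProbabilityMeasure P]
    (htrans : IsTranslationInvariant P)
    (PP : Measure (Env d E × (ℕ → (Fin d → ℤ)))) [IsProbabilityMeasure PP]
    (hPP : IsAnnealedLaw α P PP)
    (B : Set (Env d E)) (hB : MeasurableSet B) (k : ℕ)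
    (c : ℝ) (hc : ∀ A ∈ obsAll 𝓡 R P, |condProb P B A - (P B).toReal| ≤ c) :
    |(PP {p | shift (p.2 k) (k : ℤ) p.1 ∈ B}).toReal - (P B).toReal| ≤ c := by
  have hc₀ : 0 ≤ c := (abs_nonneg _).trans (hc _ (obsAll_nonempty hα.zero_mem P).some_mem)
  rcases Nat.eq_zero_or_pos k with rfl | hk
  · rw [annealed_shift_mem_zero hα htrans hPP hB]
    simpa using hc₀
  · refine abs_toReal_sub_le_of_le_of_le (measure_ne_top _ _)
      (add_nonneg ENNReal.toReal_nonneg hc₀) ?_ ?_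
    · exact le_annealed_of_forall_obsAll hα htrans hPP hB hk fun A hA =>
        ofReal_mul_le_measure_inter_of_abs_condProb_sub_le (hc A hA)
    · exact annealed_le_of_forall_obsAll hα htrans hPP hB hk fun A hA =>
        measure_inter_le_of_abs_condProb_sub_le (hc A hA)

end RWDRE
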